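/- Let K be a real Lie algebra and ∂ : K* → K a linear map that is symmetric and K-invariant. Then the bracket ⁅γ,γ'⁆_* := (∂γ)·γ' on K* is antisymmetric and satisfies the Jacobi identity, so it makes K* into a real Lie algebra; moreover ∂ : (K*, ⁅ , ⁆_*) → K is a Lie algebra homomorphism, and the coadjoint action of K on K* is by derivations of ⁅ , ⁆_*, i.e., k·⁅γ,γ'⁆_* = ⁅k·γ, γ'⁆_* + ⁅γ, k·γ'⁆_* for all k ∈ K, γ, γ' ∈ K*. -/

import Mathlib

/-! The bracket `⁅γ, γ'⁆_* = (δγ)·γ'` is skew because `δ` is invariant, and `δ` is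
`K`-equivariant because it is moreover symmetric. Since the coadjoint action is a
representation, `k·(k'·γ) = ⁅k, k'⁆·γ + k'·(k·γ)`; taking `k = δγ`, `k' = δγ'` and using
`⁅δγ, δγ'⁆ = δ ⁅γ, γ'⁆_*` gives Jacobi, and taking `k' = δγ` with `⁅k, δγ⁆ = δ(k·γ)` shows
that `K` acts by derivations. -/

open Module

/-- The coadjoint action of `k ∈ K` on `γ ∈ K*`: `(k·γ)(x) = -γ ⁅k, x⁆`. -/
def coad {K : Type*} [LieRing K] [LieAlgebra ℝ K] (k : K) (γ : Dual ℝ K) :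
    Dual ℝ K :=
  -(γ ∘ₗ (LieAlgebra.ad ℝ K k))

/-- The bracket `⁅γ,γ'⁆_* := (δγ)·γ'` on `K*`. -/
def starBracket {K : Type*} [LieRing K] [LieAlgebra ℝ K] (δ : Dual ℝ K →ₗ[ℝ] K)
    (γ γ' : Dual ℝ K) : Dual ℝ K :=
  coad (δ γ) γ'

section

variable {K : Type*} [LieRing K] [LieAlgebra ℝ K]

lemma coad_apply (k : K) (γ : Dual ℝ K) (x : K) : coad k γ x = -γ ⁅k, x⁆ := rfl

lemma coad_coad (k k' : K) (γ : Dual ℝ K) :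
    coad k (coad k' γ) = coad ⁅k, k'⁆ γ + coad k' (coad k γ) := by
  ext x
  simp only [coad_apply, LinearMap.add_apply, leibniz_lie k k' x, map_add]
  ring

variable (δ : Dual ℝ K →ₗ[ℝ] K)

lemma starBracket_antisymm
    (hinv : ∀ (k : K) (γ γ' : Dual ℝ K), γ ⁅k, δ γ'⁆ + γ' ⁅k, δ γ⁆ = 0)
    (γ γ' : Dual ℝ K) : starBracket δ γ γ' = -starBracket δ γ' γ := by
  ext x
  have h := hinv x γ' γ
  rw [← lie_skew x (δ γ), ← lie_skew x (δ γ'), map_neg, map_neg] at h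
  simp only [starBracket, coad_apply, LinearMap.neg_apply]
  linarith

lemma map_coad (hsym : ∀ γ γ' : Dual ℝ K, γ' (δ γ) = γ (δ γ'))
    (hinv : ∀ (k : K) (γ γ' : Dual ℝ K), γ ⁅k, δ γ'⁆ + γ' ⁅k, δ γ⁆ = 0)
    (k : K) (γ : Dual ℝ K) : δ (coad k γ) = ⁅k, δ γ⁆ := by
  refine eval_apply_injective ℝ (LinearMap.ext fun μ => ?_)
  have h := hinv k γ μ
  simp only [Dual.eval_apply, hsym (coad k γ) μ, coad_apply]
  linarith

end

theorem stmt7 {K : Type*} [LieRing K] [LieAlgebra ℝ K]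
    (δ : Dual ℝ K →ₗ[ℝ] K)
    (hsym : ∀ γ γ' : Dual ℝ K, γ' (δ γ) = γ (δ γ'))
    (hinv : ∀ (k : K) (γ γ' : Dual ℝ K), γ ⁅k, δ γ'⁆ + γ' ⁅k, δ γ⁆ = 0) :
    -- antisymmetry
    (∀ γ γ' : Dual ℝ K, starBracket δ γ γ' = - starBracket δ γ' γ) ∧
    -- Jacobi identity
    (∀ γ γ' γ'' : Dual ℝ K,
        starBracket δ γ (starBracket δ γ' γ'')
          = starBracket δ (starBracket δ γ γ') γ''
            + starBracket δ γ' (starBracket δ γ γ'')) ∧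
    -- δ is a Lie algebra homomorphism
    (∀ γ γ' : Dual ℝ K, δ (starBracket δ γ γ') = ⁅δ γ, δ γ'⁆) ∧
    -- the coadjoint action acts by derivations of the star bracket
    (∀ (k : K) (γ γ' : Dual ℝ K),
        coad k (starBracket δ γ γ')
          = starBracket δ (coad k γ) γ' + starBracket δ γ (coad k γ')) := by
  refine ⟨starBracket_antisymm δ hinv, fun γ γ' γ'' => ?_,
    fun γ γ' => map_coad δ hsym hinv (δ γ) γ', fun k γ γ' => ?_⟩
  · simp only [starBracket, coad_coad (δ γ) (δ γ'), map_coad δ hsym hinv]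
  · simp only [starBracket, coad_coad k (δ γ), map_coad δ hsym hinv]
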